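/- arXiv:0908.0070 — 4 statements merged into one kernel-verified Lean document; each statement's English description precedes it below -/
import Mathlib

section
/- Let A and B be unital C*-algebras, with e the unit of A, and let p ∈ (0, 1) and θ ∈ [0, ∞) be real numbers. Let f : A → B be a mapping with f(0) = 0 such that f(3^n·u·y + 3^n·y·u) = f(3^n·u)·f(y) + f(y)·f(3^n·u) for every unitary u ∈ U(A), every y ∈ A, and every natural number n. Suppose that ‖2 f((μx + μy)/2) − μ f(x) − μ f(y) + f(z*) − f(z)*‖ ≤ θ(‖x‖^p + ‖y‖^p + ‖z‖^p) for every complex number μ with |μ| = 1 and all x, y, z ∈ A. If the limit lim_{n→∞} 3^{-n} f(3^n e) exists and is a unitary element of B lying in the algebraic center Z(B), then f is a Jordan *-homomorphism. -/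
/-!
Hyers' direct method. The approximate Jensen inequality gives
`‖f (3 • x) - 3 • f x‖ = O(‖x‖ ^ p)`, so `3⁻ⁿ f (3ⁿ x)` is Cauchy with ratio `3 ^ (p - 1) < 1`; its
limit `h` is additive, commutes with unimodular scalars (hence is `ℂ`-linear) and with `star`,
because every defect of `f` is `O(‖x‖ ^ p)` and disappears after rescaling by `3⁻ⁿ`.
The Jordan condition at `u = 1` gives `h = T f`, so `f = T⋆ h = T h` is a linear `⋆`-map, and the
Jordan identity for unitaries (`n = 0`) extends to all of `A` since unitaries span a C⋆-algebra.
-/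

open Filter Topology

noncomputable def hyersSeq {E F : Type*} [AddMonoid E] [AddCommGroup F] [Module ℂ F]
    (f : E → F) (n : ℕ) (x : E) : F :=
  ((3 : ℂ) ^ n)⁻¹ • f ((3 ^ n : ℕ) • x)

lemma three_rpow_div_three_lt_one {p : ℝ} (hp1 : p < 1) : (3 : ℝ) ^ p / 3 < 1 := by
  rw [div_lt_one three_pos]
  simpa using Real.rpow_lt_rpow_of_exponent_lt (by norm_num : (1 : ℝ) < 3) hp1

section HyersSequence

variable {E F : Type*} [NormedAddCommGroup E] [NormedSpace ℂ E]
  [NormedAddCommGroup F] [NormedSpace ℂ F] {p θ : ℝ} {f h : E → F}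

lemma norm_three_pow_nsmul_rpow (n : ℕ) (x : E) :
    ‖(3 ^ n : ℕ) • x‖ ^ p = ((3 : ℝ) ^ n) ^ p * ‖x‖ ^ p := by
  rw [RCLike.norm_nsmul ℂ, nsmul_eq_mul, Nat.cast_pow, Nat.cast_ofNat,
    Real.mul_rpow (by positivity) (norm_nonneg x)]

lemma norm_inv_three_pow_smul_le {t : F} {K : ℝ} {n : ℕ}
    (ht : ‖t‖ ≤ K * ((3 : ℝ) ^ n) ^ p) : ‖((3 : ℂ) ^ n)⁻¹ • t‖ ≤ K * (3 ^ p / 3) ^ n := by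
  rw [norm_smul, norm_inv, norm_pow, Complex.norm_ofNat, div_pow,
    Real.rpow_pow_comm (by norm_num)]
  calc ((3 : ℝ) ^ n)⁻¹ * ‖t‖ ≤ ((3 : ℝ) ^ n)⁻¹ * (K * ((3 : ℝ) ^ n) ^ p) := by gcongr
    _ = K * (((3 : ℝ) ^ n) ^ p / 3 ^ n) := by ring

lemma tendsto_inv_three_pow_smul_zero (hp1 : p < 1) {t : ℕ → F} {K : ℝ}
    (ht : ∀ n, ‖t n‖ ≤ K * ((3 : ℝ) ^ n) ^ p) :
    Tendsto (fun n ↦ ((3 : ℂ) ^ n)⁻¹ • t n) atTop (𝓝 0) := by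
  refine squeeze_zero_norm (fun n ↦ norm_inv_three_pow_smul_le (ht n)) ?_
  simpa using (tendsto_pow_atTop_nhds_zero_of_lt_one (by positivity)
    (three_rpow_div_three_lt_one hp1)).const_mul K

lemma eq_zero_of_tendsto_inv_three_pow_smul (hp1 : p < 1) {t : ℕ → F} {K : ℝ} {L : F}
    (hL : Tendsto (fun n ↦ ((3 : ℂ) ^ n)⁻¹ • t n) atTop (𝓝 L))
    (ht : ∀ n, ‖t n‖ ≤ K * ((3 : ℝ) ^ n) ^ p) : L = 0 :=
  tendsto_nhds_unique hL (tendsto_inv_three_pow_smul_zero hp1 ht)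

lemma cauchySeq_hyersSeq (hp1 : p < 1) {C : ℝ}
    (h3 : ∀ x, ‖f ((3 : ℕ) • x) - (3 : ℕ) • f x‖ ≤ C * ‖x‖ ^ p) (x : E) :
    CauchySeq (fun n ↦ hyersSeq f n x) := by
  refine cauchySeq_of_le_geometric _ (C * ‖x‖ ^ p / 3) (three_rpow_div_three_lt_one hp1)
    fun n ↦ ?_
  have hsucc : (3 ^ (n + 1) : ℕ) • x = (3 : ℕ) • (3 ^ n : ℕ) • x := by
    rw [smul_smul, ← pow_succ']
  have hdiff : hyersSeq f n x - hyersSeq f (n + 1) x = ((3 : ℂ) ^ n)⁻¹ •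
      ((3 : ℂ)⁻¹ • ((3 : ℕ) • f ((3 ^ n : ℕ) • x) - f ((3 : ℕ) • (3 ^ n : ℕ) • x))) := by
    rw [hyersSeq, hyersSeq, hsucc, ← Nat.cast_smul_eq_nsmul ℂ 3 (f _), Nat.cast_ofNat]
    module
  rw [dist_eq_norm, hdiff]
  refine norm_inv_three_pow_smul_le ?_
  rw [norm_smul, norm_inv, Complex.norm_ofNat, norm_sub_rev]
  calc 3⁻¹ * ‖f ((3 : ℕ) • (3 ^ n : ℕ) • x) - (3 : ℕ) • f ((3 ^ n : ℕ) • x)‖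
      ≤ 3⁻¹ * (C * ‖(3 ^ n : ℕ) • x‖ ^ p) := by gcongr; exact h3 _
    _ = C * ‖x‖ ^ p / 3 * ((3 : ℝ) ^ n) ^ p := by rw [norm_three_pow_nsmul_rpow]; ring

lemma norm_three_nsmul_sub_le_of_jensen (hf0 : f 0 = 0)
    (hJ : ∀ x y, ‖(2 : ℂ) • f ((2⁻¹ : ℂ) • (x + y)) - f x - f y‖ ≤ θ * (‖x‖ ^ p + ‖y‖ ^ p))
    (x : E) : ‖f ((3 : ℕ) • x) - (3 : ℕ) • f x‖ ≤ θ * (3 ^ p + 3) * ‖x‖ ^ p := by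
  have h3x : (3 : ℕ) • x = (3 : ℂ) • x := by norm_num [← Nat.cast_smul_eq_nsmul ℂ]
  have hfar := hJ ((3 : ℕ) • x) (-x)
  have hnear := hJ x (-x)
  rw [h3x, show (2⁻¹ : ℂ) • ((3 : ℂ) • x + -x) = x by module] at hfar
  rw [add_neg_cancel, smul_zero, hf0, smul_zero] at hnear
  rw [norm_neg, norm_smul, Complex.norm_ofNat,
    Real.mul_rpow (by norm_num) (norm_nonneg x)] at hfar
  rw [norm_neg] at hnear
  calc ‖f ((3 : ℕ) • x) - (3 : ℕ) • f x‖
      = ‖-((2 : ℂ) • f x - f ((3 : ℂ) • x) - f (-x)) + (0 - f x - f (-x))‖ := by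
        rw [h3x, ← Nat.cast_smul_eq_nsmul ℂ]; congr 1; module
    _ ≤ θ * (3 ^ p * ‖x‖ ^ p + ‖x‖ ^ p) + θ * (‖x‖ ^ p + ‖x‖ ^ p) :=
        (norm_add_le _ _).trans (by rw [norm_neg]; exact add_le_add hfar hnear)
    _ = θ * (3 ^ p + 3) * ‖x‖ ^ p := by ring

lemma hyersLimit_jensen (hp1 : p < 1)
    (hh : ∀ x, Tendsto (fun n ↦ hyersSeq f n x) atTop (𝓝 (h x)))
    (hJ : ∀ x y, ‖(2 : ℂ) • f ((2⁻¹ : ℂ) • (x + y)) - f x - f y‖ ≤ θ * (‖x‖ ^ p + ‖y‖ ^ p))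
    (x y : E) : (2 : ℂ) • h ((2⁻¹ : ℂ) • (x + y)) = h x + h y := by
  rw [← sub_eq_zero, ← sub_sub]
  refine eq_zero_of_tendsto_inv_three_pow_smul hp1 (K := θ * (‖x‖ ^ p + ‖y‖ ^ p))
    (t := fun n ↦ (2 : ℂ) • f ((2⁻¹ : ℂ) • ((3 ^ n : ℕ) • x + (3 ^ n : ℕ) • y))
      - f ((3 ^ n : ℕ) • x) - f ((3 ^ n : ℕ) • y))
    ((((hh _).const_smul (2 : ℂ)).sub (hh x) |>.sub (hh y)).congr fun n ↦ ?_) fun n ↦ ?_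
  · rw [hyersSeq, hyersSeq, hyersSeq, smul_comm (3 ^ n : ℕ) (2⁻¹ : ℂ), smul_add, smul_sub,
      smul_sub, smul_comm (2 : ℂ) ((3 : ℂ) ^ n)⁻¹]
  · refine (hJ _ _).trans_eq ?_
    rw [norm_three_pow_nsmul_rpow, norm_three_pow_nsmul_rpow]
    ring

lemma hyersLimit_map_unit_smul (hp1 : p < 1)
    (hh : ∀ x, Tendsto (fun n ↦ hyersSeq f n x) atTop (𝓝 (h x)))
    (hμ : ∀ μ : ℂ, ‖μ‖ = 1 → ∀ x, ‖f (μ • x) - μ • f x‖ ≤ θ * ‖x‖ ^ p)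
    (μ : ℂ) (hμ1 : ‖μ‖ = 1) (x : E) : h (μ • x) = μ • h x := by
  rw [← sub_eq_zero]
  refine eq_zero_of_tendsto_inv_three_pow_smul hp1 (K := θ * ‖x‖ ^ p)
    (t := fun n ↦ f (μ • (3 ^ n : ℕ) • x) - μ • f ((3 ^ n : ℕ) • x))
    (((hh _).sub ((hh x).const_smul μ)).congr fun n ↦ ?_) fun n ↦ ?_
  · rw [hyersSeq, hyersSeq, smul_comm (3 ^ n : ℕ) μ x, smul_sub, smul_comm μ ((3 : ℂ) ^ n)⁻¹]
  · refine (hμ μ hμ1 _).trans_eq ?_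
    rw [norm_three_pow_nsmul_rpow]
    ring

end HyersSequence

lemma hyersLimit_map_zero {E F : Type*} [AddMonoid E] [NormedAddCommGroup F] [NormedSpace ℂ F]
    {f h : E → F} (hh : ∀ x, Tendsto (fun n ↦ hyersSeq f n x) atTop (𝓝 (h x)))
    (hf0 : f 0 = 0) : h 0 = 0 :=
  tendsto_nhds_unique (hh 0) (by simp [hyersSeq, hf0])

lemma hyersLimit_map_star {E F : Type*} [NormedAddCommGroup E] [NormedSpace ℂ E] [StarAddMonoid E]
    [NormedAddCommGroup F] [NormedSpace ℂ F] [StarAddMonoid F] [StarModule ℂ F] [ContinuousStar F]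
    {p θ : ℝ} {f h : E → F} (hp1 : p < 1)
    (hh : ∀ x, Tendsto (fun n ↦ hyersSeq f n x) atTop (𝓝 (h x)))
    (hstar : ∀ z, ‖f (star z) - star (f z)‖ ≤ θ * ‖z‖ ^ p) (x : E) :
    h (star x) = star (h x) := by
  rw [← sub_eq_zero]
  refine eq_zero_of_tendsto_inv_three_pow_smul hp1 (K := θ * ‖x‖ ^ p)
    (t := fun n ↦ f (star ((3 ^ n : ℕ) • x)) - star (f ((3 ^ n : ℕ) • x)))
    (((hh _).sub (hh x).star).congr fun n ↦ ?_) fun n ↦ ?_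
  · simp [hyersSeq, smul_sub]
  · refine (hstar _).trans_eq ?_
    rw [norm_three_pow_nsmul_rpow]
    ring

lemma map_add_of_jensen {R E F : Type*} [DivisionRing R] [AddCommGroup E] [Module R E]
    [AddCommGroup F] [Module R F] {h : E → F} (h0 : h 0 = 0)
    (hJ : ∀ x y, (2 : R) • h ((2⁻¹ : R) • (x + y)) = h x + h y) (x y : E) :
    h (x + y) = h x + h y := by
  have hJ0 := hJ (x + y) 0
  rw [add_zero, h0, add_zero] at hJ0
  rw [← hJ0, hJ]

lemma map_smul_of_map_unit_smul {E F : Type*} [AddCommGroup E] [Module ℂ E]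
    [AddCommGroup F] [Module ℂ F] {h : E → F} (hadd : ∀ x y, h (x + y) = h x + h y)
    (hunit : ∀ μ : ℂ, ‖μ‖ = 1 → ∀ x, h (μ • x) = μ • h x) (c : ℂ) (x : E) :
    h (c • x) = c • h x := by
  have hsmall : ∀ s : ℝ, |s| ≤ 1 → ∀ x, h (((2 * s : ℝ) : ℂ) • x) = ((2 * s : ℝ) : ℂ) • h x := by
    intro s hs x
    set μ : ℂ := Complex.exp (Real.arccos s * Complex.I)
    have hμ : ‖μ‖ = 1 := Complex.norm_exp_ofReal_mul_I _
    have hsum : ((2 * s : ℝ) : ℂ) = μ + star μ := by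
      rw [Complex.star_def, Complex.add_conj, Complex.exp_ofReal_mul_I_re,
        Real.cos_arccos (abs_le.mp hs).1 (abs_le.mp hs).2]
    rw [hsum, add_smul, add_smul, hadd, hunit μ hμ, hunit (star μ) (by rwa [norm_star])]
  have hreal : ∀ (r : ℝ) x, h ((r : ℂ) • x) = (r : ℂ) • h x := by
    intro r x
    obtain ⟨n, hn⟩ := exists_nat_ge |r|
    have hs : |r / (2 * (n + 1))| ≤ 1 := by
      have hm : (0 : ℝ) < 2 * (n + 1) := by positivity
      rw [abs_div, abs_of_pos hm, div_le_one hm]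
      linarith
    have hr : (r : ℂ) = (n + 1 : ℕ) * ((2 * (r / (2 * (n + 1))) : ℝ) : ℂ) := by
      push_cast
      field_simp
    rw [hr, mul_smul, mul_smul, Nat.cast_smul_eq_nsmul, Nat.cast_smul_eq_nsmul,
      ← AddMonoidHom.mk'_apply h hadd, map_nsmul, AddMonoidHom.mk'_apply, hsmall _ hs]
  rw [← Complex.re_add_im c, add_smul, add_smul, hadd, mul_smul, mul_smul, hreal, hreal,
    hunit _ Complex.norm_I]

section

variable {E F : Type*} [NormedAddCommGroup E] [NormedSpace ℂ E] [StarAddMonoid E]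
  [NormedAddCommGroup F] [NormedSpace ℂ F] [StarAddMonoid F]

def ApproxJensenStar (p θ : ℝ) (f : E → F) : Prop :=
  ∀ μ : ℂ, ‖μ‖ = 1 → ∀ x y z : E,
    ‖(2 : ℂ) • f ((2⁻¹ : ℂ) • (μ • x + μ • y)) - μ • f x - μ • f y + f (star z) - star (f z)‖
      ≤ θ * (‖x‖ ^ p + ‖y‖ ^ p + ‖z‖ ^ p)

namespace ApproxJensenStar

variable {p θ : ℝ} {f : E → F}

lemma norm_jensen_le (hf : ApproxJensenStar p θ f) (hp : 0 < p) (hf0 : f 0 = 0) (x y : E) :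
    ‖(2 : ℂ) • f ((2⁻¹ : ℂ) • (x + y)) - f x - f y‖ ≤ θ * (‖x‖ ^ p + ‖y‖ ^ p) := by
  simpa [hf0, Real.zero_rpow hp.ne'] using hf 1 norm_one x y 0

lemma norm_map_star_sub_le (hf : ApproxJensenStar p θ f) (hp : 0 < p) (hf0 : f 0 = 0) (z : E) :
    ‖f (star z) - star (f z)‖ ≤ θ * ‖z‖ ^ p := by
  simpa [hf0, Real.zero_rpow hp.ne'] using hf 1 norm_one 0 0 z

lemma norm_map_unit_smul_sub_le (hf : ApproxJensenStar p θ f) (hp : 0 < p) (hf0 : f 0 = 0)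
    (μ : ℂ) (hμ : ‖μ‖ = 1) (x : E) : ‖f (μ • x) - μ • f x‖ ≤ θ * ‖x‖ ^ p := by
  have h := hf μ hμ x x 0
  rw [show (2⁻¹ : ℂ) • (μ • x + μ • x) = μ • x by module, star_zero, hf0, star_zero, sub_zero,
    add_zero, show (2 : ℂ) • f (μ • x) - μ • f x - μ • f x = (2 : ℂ) • (f (μ • x) - μ • f x) by
      module, norm_smul, norm_zero, Real.zero_rpow hp.ne', add_zero, Complex.norm_ofNat] at h
  linarith

end ApproxJensenStar

end

lemma hyersLimit_eq_mul_of_jordan_one {A B : Type*} [Ring A] [NormedRing B] [NormedAlgebra ℂ B]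
    {f h : A → B} {T : B} (hh : ∀ x, Tendsto (fun n ↦ hyersSeq f n x) atTop (𝓝 (h x)))
    (hadd : ∀ x y, h (x + y) = h x + h y)
    (hT : Tendsto (fun n ↦ hyersSeq f n 1) atTop (𝓝 T)) (hTZ : T ∈ Set.center B)
    (hjordan : ∀ (y : A) (n : ℕ), f ((3 ^ n : ℕ) • (1 * y) + (3 ^ n : ℕ) • (y * 1))
      = f ((3 ^ n : ℕ) • 1) * f y + f y * f ((3 ^ n : ℕ) • 1))
    (y : A) : h y = T * f y := by
  have hcomm : f y * T = T * f y := ((Set.mem_center_iff.mp hTZ).comm (f y)).symm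
  have hsum : h (y + y) = T * f y + f y * T := by
    refine tendsto_nhds_unique (hh (y + y))
      (((hT.mul_const (f y)).add (hT.const_mul (f y))).congr fun n ↦ ?_)
    have hjordan_n := hjordan y n
    rw [one_mul, mul_one, ← smul_add] at hjordan_n
    rw [hyersSeq, hyersSeq, hjordan_n, smul_add, smul_mul_assoc, mul_smul_comm]
  have h2 : (2 : ℂ) • h y = (2 : ℂ) • (T * f y) := by
    rw [two_smul, two_smul, ← hadd, hsum, hcomm]
  exact smul_right_injective B two_ne_zero h2

lemma LinearMap.map_jordan_of_map_jordan_unitary {A B : Type*} [CStarAlgebra A] [Ring B]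
    [Algebra ℂ B] (φ : A →ₗ[ℂ] B)
    (hφ : ∀ u ∈ unitary A, ∀ y, φ (u * y + y * u) = φ u * φ y + φ y * φ u) (x y : A) :
    φ (x * y + y * x) = φ x * φ y + φ y * φ x := by
  have hx : x ∈ Submodule.span ℂ (unitary A : Set A) := by
    rw [CStarAlgebra.span_unitary]; trivial
  induction hx using Submodule.span_induction with
  | mem u hu => exact hφ u hu y
  | zero => simp
  | add a b _ _ ha hb =>
    rw [add_mul, mul_add, add_add_add_comm, map_add, ha, hb, map_add, add_mul, mul_add]
    abel
  | smul c a _ ha =>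
    rw [smul_mul_assoc, mul_smul_comm, ← smul_add, map_smul, ha, map_smul, smul_add,
      smul_mul_assoc, mul_smul_comm]

theorem stmt1_general
    {A B : Type*}
    [NormedRing A] [StarRing A] [CStarRing A] [CompleteSpace A]
    [NormedAlgebra ℂ A] [StarModule ℂ A]
    [NormedRing B] [StarRing B] [CStarRing B] [CompleteSpace B]
    [NormedAlgebra ℂ B] [StarModule ℂ B]
    (p θ : ℝ) (hp : 0 < p) (hp1 : p < 1)
    (f : A → B) (hf0 : f 0 = 0)
    (hmult : ∀ u ∈ unitary A, ∀ (y : A) (n : ℕ),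
      f ((3 ^ n : ℕ) • (u * y) + (3 ^ n : ℕ) • (y * u))
        = f ((3 ^ n : ℕ) • u) * f y + f y * f ((3 ^ n : ℕ) • u))
    (hineq : ∀ μ : ℂ, ‖μ‖ = 1 → ∀ x y z : A,
      ‖(2 : ℂ) • f ((2⁻¹ : ℂ) • (μ • x + μ • y)) - μ • f x - μ • f y
          + f (star z) - star (f z)‖ ≤ θ * (‖x‖ ^ p + ‖y‖ ^ p + ‖z‖ ^ p))
    (T : B) (hTU : T ∈ unitary B) (hTZ : T ∈ Set.center B)
    (hlim : Tendsto (fun n : ℕ => ((3 : ℂ) ^ n)⁻¹ • f ((3 ^ n : ℕ) • (1 : A)))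
      atTop (𝓝 T)) :
    (∀ x y : A, f (x + y) = f x + f y) ∧
    (∀ (c : ℂ) (x : A), f (c • x) = c • f x) ∧
    (∀ x y : A, f (x * y + y * x) = f x * f y + f y * f x) ∧
    (∀ x : A, f (star x) = star (f x)) := by
  let _ : CStarAlgebra A := {}
  have hf : ApproxJensenStar p θ f := hineq
  have hJ := hf.norm_jensen_le hp hf0
  choose h hh using fun x ↦ cauchySeq_tendsto_of_complete
    (cauchySeq_hyersSeq hp1 (norm_three_nsmul_sub_le_of_jensen hf0 hJ) x)
  have hadd := map_add_of_jensen (hyersLimit_map_zero hh hf0) (hyersLimit_jensen hp1 hh hJ)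
  have hsmul := map_smul_of_map_unit_smul hadd
    (hyersLimit_map_unit_smul hp1 hh (hf.norm_map_unit_smul_sub_le hp hf0))
  have hstar := hyersLimit_map_star hp1 hh (hf.norm_map_star_sub_le hp hf0)
  have hh_eq := hyersLimit_eq_mul_of_jordan_one hh hadd hlim hTZ (hmult 1 (one_mem _))
  have hf_eq : ∀ y, f y = star T * h y := fun y ↦ by
    rw [hh_eq, ← mul_assoc, Unitary.star_mul_self_of_mem hTU, one_mul]
  have hTsa : star T = T := by
    rw [← tendsto_nhds_unique (hh 1) hlim, ← hstar, star_one]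
  let hℓ : A →ₗ[ℂ] B := { toFun := h, map_add' := hadd, map_smul' := hsmul }
  let φ : A →ₗ[ℂ] B := LinearMap.mulLeft ℂ (star T) ∘ₗ hℓ
  have hfφ : f = φ := funext hf_eq
  refine ⟨by simp [hfφ], by simp [hfφ], ?_, fun x ↦ ?_⟩
  · rw [hfφ]
    exact φ.map_jordan_of_map_jordan_unitary fun u hu y ↦ by simpa [hfφ] using hmult u hu y 0
  · rw [hf_eq, hf_eq, hstar, star_mul, star_star, hTsa, (Set.mem_center_iff.mp hTZ).comm]

/-- With `p ∈ (0,1)` and `θ ≥ 0`, if `f : A → B` satisfies `f 0 = 0`,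
the Jordan-type multiplicativity condition on `3^n`-scaled unitaries, the approximate
Jensen inequality with control `θ(‖x‖^p + ‖y‖^p + ‖z‖^p)`, and `lim 3⁻ⁿ f(3ⁿ e)` exists
and is a unitary element of the center of `B`, then `f` is a Jordan *-homomorphism. -/
theorem stmt1
    {A B : Type*}
    [NormedRing A] [StarRing A] [CStarRing A] [CompleteSpace A]
    [NormedAlgebra ℂ A] [StarModule ℂ A]
    [NormedRing B] [StarRing B] [CStarRing B] [CompleteSpace B]
    [NormedAlgebra ℂ B] [StarModule ℂ B]
    (p θ : ℝ) (hp : 0 < p) (hp1 : p < 1) (hθ : 0 ≤ θ)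
    (f : A → B) (hf0 : f 0 = 0)
    (hmult : ∀ u ∈ unitary A, ∀ (y : A) (n : ℕ),
      f ((3 ^ n : ℕ) • (u * y) + (3 ^ n : ℕ) • (y * u))
        = f ((3 ^ n : ℕ) • u) * f y + f y * f ((3 ^ n : ℕ) • u))
    (hineq : ∀ μ : ℂ, ‖μ‖ = 1 → ∀ x y z : A,
      ‖(2 : ℂ) • f ((2⁻¹ : ℂ) • (μ • x + μ • y)) - μ • f x - μ • f y
          + f (star z) - star (f z)‖ ≤ θ * (‖x‖ ^ p + ‖y‖ ^ p + ‖z‖ ^ p))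
    (T : B) (hTU : T ∈ unitary B) (hTZ : T ∈ Set.center B)
    (hlim : Tendsto (fun n : ℕ => ((3 : ℂ) ^ n)⁻¹ • f ((3 ^ n : ℕ) • (1 : A)))
      atTop (𝓝 T)) :
    (∀ x y : A, f (x + y) = f x + f y) ∧
    (∀ (c : ℂ) (x : A), f (c • x) = c • f x) ∧
    (∀ x y : A, f (x * y + y * x) = f x * f y + f y * f x) ∧
    (∀ x : A, f (star x) = star (f x)) :=
  stmt1_general p θ hp hp1 f hf0 hmult hineq T hTU hTZ hlim
end

section
/- Let A and B be unital C*-algebras, with e the unit of A, and assume A has real rank zero, i.e. the set of invertible self-adjoint elements of A is dense in the set of self-adjoint elements of A. Let p ∈ (0, 1) and θ ∈ [0, ∞) be real numbers. Let f : A → B be a continuous mapping with f(0) = 0 such that f(3^n·u·y + 3^n·y·u) = f(3^n·u)·f(y) + f(y)·f(3^n·u) for every u ∈ I₁(A_sa), every y ∈ A, and every natural number n. Suppose that ‖2 f((μx + μy)/2) − μ f(x) − μ f(y) + f(z*) − f(z)*‖ ≤ θ(‖x‖^p + ‖y‖^p + ‖z‖^p) for every complex number μ with |μ| = 1 and all x,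 y, z ∈ A. If the limit lim_{n→∞} 3^{-n} f(3^n e) exists and is a unitary element of B lying in the algebraic center Z(B), then f is a Jordan *-homomorphism. -/
open Filter Topology

/-!
Taking `u = 1` in the Jordan condition gives `f(3ⁿx) = f(3ⁿe) f(x/2) + f(x/2) f(3ⁿe)`, so
`3⁻ⁿ f(3ⁿx)` converges to `L x = T f(x/2) + f(x/2) T` for every `x`. Since `p < 1`, this
rescaling kills the error term of the approximate Jensen inequality, so `L` satisfies the
Jensen equation exactly: it is additive, `*`-preserving and unit-homogeneous, hence `ℂ`-linear
by continuity. In the limit the Jordan condition becomes `L(uy + yu) = L u f y + f y L u`; at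
`u = e` this reads `L = T f`, and as `T` is a central self-adjoint unitary, `f = T L` is a
linear `*`-map satisfying the Jordan identity on `I₁(A_sa)`. The identity spreads by scaling to
invertible self-adjoint elements, by real rank zero and continuity to all self-adjoint ones, and
by `x = ℜx + iℑx` to all of `A`.
-/

section JensenStar

variable {A B : Type*} [AddCommGroup A] [Module ℂ A] [StarAddMonoid A]
  [AddCommGroup B] [Module ℂ B] [StarAddMonoid B]

noncomputable def jensenStarDefect (f : A → B) (μ : ℂ) (x y z : A) : B :=
  (2 : ℂ) • f ((2⁻¹ : ℂ) • (μ • x + μ • y)) - μ • f x - μ • f y + f (star z) - star (f z)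

def IsJensenStar (L : A → B) : Prop :=
  ∀ μ : ℂ, ‖μ‖ = 1 → ∀ x y z, jensenStarDefect L μ x y z = 0

namespace IsJensenStar

variable {L : A → B}

lemma map_zero
    (hL : IsJensenStar L) : L 0 = 0 := by
  have h₁ := hL 1 (by simp) 0 0 0
  have h₂ := hL (-1) (by simp) 0 0 0
  simp only [jensenStarDefect, smul_zero, add_zero, star_zero] at h₁ h₂
  have h₄ : (4 : ℂ) • L 0 = 0 := by linear_combination (norm := module) h₂ - h₁
  exact (smul_eq_zero.1 h₄).resolve_left (by norm_num)

lemma map_star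
    (hL : IsJensenStar L) (z : A) :
    L (star z) = star (L z) := by
  have h := hL 1 (by simp) 0 0 z
  simp only [jensenStarDefect, smul_zero, add_zero, hL.map_zero,
    sub_zero, zero_add] at h
  exact sub_eq_zero.1 h

lemma two_smul_map_half_add
    (hL : IsJensenStar L) (x y : A) :
    (2 : ℂ) • L ((2⁻¹ : ℂ) • (x + y)) = L x + L y := by
  have h := hL 1 (by simp) x y 0
  simp only [jensenStarDefect, one_smul, star_zero, hL.map_zero,
    add_zero, sub_zero] at h
  rwa [sub_sub, sub_eq_zero] at h

lemma map_add
    (hL : IsJensenStar L) (x y : A) :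
    L (x + y) = L x + L y := by
  have h := hL.two_smul_map_half_add (x + y) 0
  rwa [add_zero, hL.map_zero, add_zero,
    hL.two_smul_map_half_add, eq_comm] at h

lemma map_smul
    (hL : IsJensenStar L) {μ : ℂ} (hμ : ‖μ‖ = 1)
    (x : A) : L (μ • x) = μ • L x := by
  have h := hL μ hμ x x 0
  have hx : (2⁻¹ : ℂ) • (μ • x + μ • x) = μ • x := by module
  simp only [jensenStarDefect, hx, star_zero, hL.map_zero,
    add_zero, sub_zero] at h
  refine smul_right_injective B (two_ne_zero (α := ℂ)) ?_
  linear_combination (norm := module) h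

end IsJensenStar

end JensenStar

noncomputable def rescale {A B : Type*} [SMul ℂ A] [SMul ℂ B] (c : ℂ) (f : A → B) (x : A) : B :=
  c⁻¹ • f (c • x)

section HyersUlam

variable {A B : Type*} [NormedAddCommGroup A] [NormedSpace ℂ A] [StarAddMonoid A]
  [NormedAddCommGroup B] [NormedSpace ℂ B] [StarAddMonoid B]

lemma IsJensenStar.isLinearMap {L : A → B} (hL : IsJensenStar L) (hc : Continuous L) :
    IsLinearMap ℂ L := by
  have hadd := hL.map_add
  have hreal (r : ℝ) (x : A) : L ((r : ℂ) • x) = (r : ℂ) • L x := by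
    simpa only [Complex.coe_smul, AddMonoidHom.mk'_apply] using
      map_real_smul (AddMonoidHom.mk' L hadd) hc r x
  refine ⟨hadd, fun c x => ?_⟩
  rw [← Complex.re_add_im c]
  simp only [add_smul, mul_smul, hadd, hreal,
    hL.map_smul (μ := Complex.I) (by simp)]

lemma jensenStarDefect_eq_zero_of_tendsto [ContinuousStar B] {ι : Type*} {l : Filter ι} [l.NeBot]
    {g : ι → A → B} {L : A → B} (hg : ∀ x, Tendsto (fun i => g i x) l (𝓝 (L x))) {μ : ℂ}
    {x y z : A} (h : Tendsto (fun i => jensenStarDefect (g i) μ x y z) l (𝓝 0)) :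
    jensenStarDefect L μ x y z = 0 :=
  tendsto_nhds_unique ((((((hg _).const_smul _).sub ((hg x).const_smul μ)).sub
    ((hg y).const_smul μ)).add (hg _)).sub (hg z).star) h

variable [StarModule ℂ A] [StarModule ℂ B]

lemma jensenStarDefect_rescale {c : ℂ} (hc : star c = c) (f : A → B) (μ : ℂ) (x y z : A) :
    jensenStarDefect (rescale c f) μ x y z
      = c⁻¹ • jensenStarDefect f μ (c • x) (c • y) (c • z) := by
  have hxy : c • (2⁻¹ : ℂ) • (μ • x + μ • y) = (2⁻¹ : ℂ) • (μ • c • x + μ • c • y) := by module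
  simp only [jensenStarDefect, rescale, hxy, star_smul, star_inv₀, hc]
  module

lemma norm_jensenStarDefect_rescale_le {p θ : ℝ} {f : A → B} {μ : ℂ}
    (hf : ∀ x y z, ‖jensenStarDefect f μ x y z‖ ≤ θ * (‖x‖ ^ p + ‖y‖ ^ p + ‖z‖ ^ p))
    {c : ℂ} (hc : star c = c) (hc0 : c ≠ 0) (x y z : A) :
    ‖jensenStarDefect (rescale c f) μ x y z‖
      ≤ θ * (‖x‖ ^ p + ‖y‖ ^ p + ‖z‖ ^ p) * ‖c‖ ^ (p - 1) := by
  have hc0' : ‖c‖ ≠ 0 := norm_ne_zero_iff.2 hc0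
  rw [jensenStarDefect_rescale hc, norm_smul, norm_inv, Real.rpow_sub_one hc0']
  calc ‖c‖⁻¹ * ‖jensenStarDefect f μ (c • x) (c • y) (c • z)‖
      ≤ ‖c‖⁻¹ * (θ * (‖c • x‖ ^ p + ‖c • y‖ ^ p + ‖c • z‖ ^ p)) := by gcongr; exact hf _ _ _
    _ = θ * (‖x‖ ^ p + ‖y‖ ^ p + ‖z‖ ^ p) * (‖c‖ ^ p / ‖c‖) := by
      simp only [norm_smul, Real.mul_rpow (norm_nonneg _) (norm_nonneg _)]
      field_simp

lemma tendsto_jensenStarDefect_rescale_pow {p θ : ℝ} (hp1 : p < 1) {f : A → B} {μ : ℂ}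
    (hf : ∀ x y z, ‖jensenStarDefect f μ x y z‖ ≤ θ * (‖x‖ ^ p + ‖y‖ ^ p + ‖z‖ ^ p))
    {c : ℂ} (hc : star c = c) (hc1 : 1 < ‖c‖) (x y z : A) :
    Tendsto (fun n : ℕ => jensenStarDefect (rescale (c ^ n) f) μ x y z) atTop (𝓝 0) := by
  have hc0 : c ≠ 0 := norm_pos_iff.1 (one_pos.trans hc1)
  refine squeeze_zero_norm (fun n => norm_jensenStarDefect_rescale_le hf
    (by rw [star_pow, hc]) (pow_ne_zero n hc0) x y z) ?_
  have h : Tendsto (fun n : ℕ => ‖c ^ n‖ ^ (p - 1)) atTop (𝓝 0) := by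
    simpa [Function.comp_def] using
      (tendsto_rpow_neg_atTop (sub_pos.2 hp1)).comp (tendsto_pow_atTop_atTop_of_one_lt hc1)
  simpa using h.const_mul (θ * (‖x‖ ^ p + ‖y‖ ^ p + ‖z‖ ^ p))

end HyersUlam

lemma tendsto_rescale_of_map_smul_eq {A B : Type*} [SMul ℂ A] [Ring B] [Algebra ℂ B]
    [TopologicalSpace B] [IsTopologicalRing B] {ι : Type*} {l : Filter ι} {c : ι → ℂ}
    {f : A → B} {u w : A} {a b : B} (h : ∀ i, f (c i • w) = f (c i • u) * b + b * f (c i • u))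
    (hu : Tendsto (fun i => rescale (c i) f u) l (𝓝 a)) :
    Tendsto (fun i => rescale (c i) f w) l (𝓝 (a * b + b * a)) := by
  have hw : (fun i => rescale (c i) f w)
      = fun i => rescale (c i) f u * b + b * rescale (c i) f u :=
    funext fun i => by simp only [rescale, h, smul_add, smul_mul_assoc, mul_smul_comm]
  rw [hw]
  exact (hu.mul_const b).add (hu.const_mul b)

section JordanSubmodule

variable {A B : Type*} [Ring A] [Algebra ℂ A] [Ring B] [Algebra ℂ B]

def jordanSubmodule (φ : A →ₗ[ℂ] B) : Submodule ℂ A where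
  carrier := {x | ∀ y, φ (x * y + y * x) = φ x * φ y + φ y * φ x}
  add_mem' {a b} ha hb y := by
    have hab : (a + b) * y + y * (a + b) = (a * y + y * a) + (b * y + y * b) := by noncomm_ring
    rw [hab, map_add, ha y, hb y, map_add]
    noncomm_ring
  zero_mem' y := by simp
  smul_mem' c a ha y := by
    have hca : (c • a) * y + y * (c • a) = c • (a * y + y * a) := by
      rw [smul_add, smul_mul_assoc, mul_smul_comm]
    rw [hca, map_smul, ha y, map_smul, smul_add, smul_mul_assoc, mul_smul_comm]

lemma isClosed_jordanSubmodule [TopologicalSpace A] [IsTopologicalRing A] [TopologicalSpace B]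
    [IsTopologicalRing B] [T2Space B] {φ : A →ₗ[ℂ] B} (hφ : Continuous φ) :
    IsClosed (jordanSubmodule φ : Set A) := by
  have h : (jordanSubmodule φ : Set A)
      = ⋂ y, {x | φ (x * y + y * x) = φ x * φ y + φ y * φ x} := by
    ext x
    simp [jordanSubmodule]
  rw [h]
  exact isClosed_iInter fun y => isClosed_eq (by fun_prop) (by fun_prop)

end JordanSubmodule

section RealRankZero

variable {A B : Type*} [NormedRing A] [StarRing A] [NormedAlgebra ℂ A] [StarModule ℂ A]
  [Ring B] [Algebra ℂ B] [TopologicalSpace B] [IsTopologicalRing B] [T2Space B]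

lemma jordanSubmodule_eq_top
    (hrr0 : {x : A | IsSelfAdjoint x} ⊆ closure {x : A | IsSelfAdjoint x ∧ IsUnit x})
    {φ : A →ₗ[ℂ] B} (hφ : Continuous φ)
    (h : ∀ u : A, IsSelfAdjoint u → ‖u‖ = 1 → IsUnit u → u ∈ jordanSubmodule φ) :
    jordanSubmodule φ = ⊤ := by
  have hunit (v : A) (hv : IsSelfAdjoint v) (hvu : IsUnit v) : v ∈ jordanSubmodule φ := by
    rcases eq_or_ne v 0 with rfl | hv0
    · exact zero_mem _
    have hn : ‖v‖ ≠ 0 := norm_ne_zero_iff.2 hv0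
    rw [← smul_inv_smul₀ hn v]
    refine Submodule.smul_of_tower_mem _ _ (h _ ((IsSelfAdjoint.all _).smul hv) ?_ ?_)
    · rw [norm_smul, norm_inv, norm_norm, inv_mul_cancel₀ hn]
    · exact hvu.smul (Units.mk0 _ (inv_ne_zero hn))
  have hsa (x : A) (hx : IsSelfAdjoint x) : x ∈ jordanSubmodule φ :=
    closure_minimal (fun v hv => hunit v hv.1 hv.2) (isClosed_jordanSubmodule hφ) (hrr0 hx)
  refine eq_top_iff.2 fun x _ => ?_
  rw [← realPart_add_I_smul_imaginaryPart x]
  exact add_mem (hsa _ (realPart x).2) (Submodule.smul_mem _ _ (hsa _ (imaginaryPart x).2))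

lemma map_mul_add_mul_of_realRankZero
    (hrr0 : {x : A | IsSelfAdjoint x} ⊆ closure {x : A | IsSelfAdjoint x ∧ IsUnit x})
    {f : A → B} (hf : IsLinearMap ℂ f) (hfc : Continuous f)
    (h : ∀ u : A, IsSelfAdjoint u → ‖u‖ = 1 → IsUnit u →
      ∀ y, f (u * y + y * u) = f u * f y + f y * f u) (x y : A) :
    f (x * y + y * x) = f x * f y + f y * f x := by
  have hx : x ∈ jordanSubmodule (IsLinearMap.mk' f hf) := by
    rw [jordanSubmodule_eq_top (φ := IsLinearMap.mk' f hf) hrr0 hfc h]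
    trivial
  exact hx y

end RealRankZero

lemma eq_mul_of_mem_center_of_mem_unitary {A B : Type*} [Add A] [Ring B] [StarRing B]
    [Algebra ℂ B] {T : B} (hTU : T ∈ unitary B) (hTZ : T ∈ Set.center B)
    (hT : star T = T) {f L : A → B} (hL : ∀ x y, L (x + y) = L x + L y)
    (h : ∀ y, L (y + y) = T * f y + f y * T) (y : A) : f y = T * L y := by
  have hTT : T * T = 1 := by simpa only [hT] using Unitary.star_mul_self_of_mem hTU
  have hLf : L y = T * f y := by
    have h₂ := h y
    rw [hL, ← (Set.mem_center_iff.1 hTZ).comm, ← two_smul ℂ, ← two_smul ℂ] at h₂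
    exact smul_right_injective B two_ne_zero h₂
  rw [hLf, ← mul_assoc, hTT, one_mul]

theorem stmt3_general
    {A B : Type*}
    [NormedRing A] [StarRing A] [CStarRing A]
    [NormedAlgebra ℂ A] [StarModule ℂ A]
    [NormedRing B] [StarRing B] [CStarRing B]
    [NormedAlgebra ℂ B] [StarModule ℂ B]
    (hrr0 : {x : A | IsSelfAdjoint x} ⊆
      closure {x : A | IsSelfAdjoint x ∧ IsUnit x})
    (p θ : ℝ) (hp1 : p < 1)
    (f : A → B) (hfc : Continuous f) (hf0 : f 0 = 0)
    (hmult : ∀ u : A, IsSelfAdjoint u → ‖u‖ = 1 → IsUnit u → ∀ (y : A) (n : ℕ),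
      f ((3 ^ n : ℕ) • (u * y) + (3 ^ n : ℕ) • (y * u))
        = f ((3 ^ n : ℕ) • u) * f y + f y * f ((3 ^ n : ℕ) • u))
    (hineq : ∀ μ : ℂ, ‖μ‖ = 1 → ∀ x y z : A,
      ‖(2 : ℂ) • f ((2⁻¹ : ℂ) • (μ • x + μ • y)) - μ • f x - μ • f y
          + f (star z) - star (f z)‖ ≤ θ * (‖x‖ ^ p + ‖y‖ ^ p + ‖z‖ ^ p))
    (T : B) (hTU : T ∈ unitary B) (hTZ : T ∈ Set.center B)
    (hlim : Tendsto (fun n : ℕ => ((3 : ℂ) ^ n)⁻¹ • f ((3 ^ n : ℕ) • (1 : A)))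
      atTop (𝓝 T)) :
    (∀ x y : A, f (x + y) = f x + f y) ∧
    (∀ (c : ℂ) (x : A), f (c • x) = c • f x) ∧
    (∀ x y : A, f (x * y + y * x) = f x * f y + f y * f x) ∧
    (∀ x : A, f (star x) = star (f x)) := by
  -- `‖1‖ = 1`, needed to use `hmult` at `u = 1`, fails in the zero algebra
  rcases subsingleton_or_nontrivial A with hA | hA
  · have h (x : A) : f x = 0 := by rw [Subsingleton.elim x 0, hf0]
    simp [h]
  simp only [← Nat.cast_smul_eq_nsmul ℂ, Nat.cast_pow, Nat.cast_ofNat, ← smul_add] at hmult hlim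
  obtain ⟨L, hLc, hfL⟩ : ∃ L : A → B, Continuous L ∧
      ∀ x, Tendsto (fun n : ℕ => rescale ((3 : ℂ) ^ n) f x) atTop (𝓝 (L x)) := by
    refine ⟨fun x => T * f ((2⁻¹ : ℂ) • x) + f ((2⁻¹ : ℂ) • x) * T, by fun_prop, fun x => ?_⟩
    have hx : 1 * (2⁻¹ : ℂ) • x + (2⁻¹ : ℂ) • x * 1 = x := by rw [one_mul, mul_one]; module
    simpa only [hx] using tendsto_rescale_of_map_smul_eq
      (hmult 1 (.one A) norm_one isUnit_one ((2⁻¹ : ℂ) • x)) hlim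
  have hJ : IsJensenStar L := fun μ hμ x y z =>
    jensenStarDefect_eq_zero_of_tendsto hfL <| tendsto_jensenStarDefect_rescale_pow hp1
      (hineq μ hμ) (by simp) (by norm_num) x y z
  have hLlin := hJ.isLinearMap hLc
  have hL1 : L 1 = T := tendsto_nhds_unique (hfL 1) hlim
  have hLmul (u : A) (hu : IsSelfAdjoint u) (hu1 : ‖u‖ = 1) (huu : IsUnit u) (y : A) :
      L (u * y + y * u) = L u * f y + f y * L u :=
    tendsto_nhds_unique (hfL _) (tendsto_rescale_of_map_smul_eq (hmult u hu hu1 huu y) (hfL u))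
  have hTsa : star T = T := by rw [← hL1, ← hJ.map_star, star_one]
  have hf := eq_mul_of_mem_center_of_mem_unitary hTU hTZ hTsa hLlin.map_add fun y => by
    simpa only [one_mul, mul_one, hL1] using hLmul 1 (.one A) norm_one isUnit_one y
  have hflin : IsLinearMap ℂ f :=
    ⟨fun x y => by simp only [hf, hLlin.map_add, mul_add],
      fun c x => by simp only [hf, hLlin.map_smul, mul_smul_comm]⟩
  refine ⟨hflin.map_add, hflin.map_smul,
    map_mul_add_mul_of_realRankZero hrr0 hflin hfc fun u hu hu1 huu y => ?_, fun x => ?_⟩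
  · rw [hf, hLmul u hu hu1 huu, hf u, mul_add, ← mul_assoc, ← mul_assoc,
      (Set.mem_center_iff.1 hTZ).comm (f y)]
    simp only [mul_assoc]
  · rw [hf, hf, hJ.map_star, star_mul, hTsa,
      (Set.mem_center_iff.1 hTZ).comm]

/-- Let `A` be a unital C*-algebra of real rank zero, `p ∈ (0,1)`,
`θ ≥ 0`. If the continuous map `f : A → B` satisfies `f 0 = 0`, the Jordan-type
multiplicativity condition on `3^n`-scaled elements of `I₁(A_sa)`, the approximate
Jensen inequality with control `θ(‖x‖^p + ‖y‖^p + ‖z‖^p)`, and `lim 3⁻ⁿ f(3ⁿ e)`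
exists and is a unitary element of the center of `B`, then `f` is a Jordan
*-homomorphism. -/
theorem stmt3
    {A B : Type*}
    [NormedRing A] [StarRing A] [CStarRing A] [CompleteSpace A]
    [NormedAlgebra ℂ A] [StarModule ℂ A]
    [NormedRing B] [StarRing B] [CStarRing B] [CompleteSpace B]
    [NormedAlgebra ℂ B] [StarModule ℂ B]
    (hrr0 : {x : A | IsSelfAdjoint x} ⊆
      closure {x : A | IsSelfAdjoint x ∧ IsUnit x})
    (p θ : ℝ) (hp : 0 < p) (hp1 : p < 1) (hθ : 0 ≤ θ)
    (f : A → B) (hfc : Continuous f) (hf0 : f 0 = 0)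
    (hmult : ∀ u : A, IsSelfAdjoint u → ‖u‖ = 1 → IsUnit u → ∀ (y : A) (n : ℕ),
      f ((3 ^ n : ℕ) • (u * y) + (3 ^ n : ℕ) • (y * u))
        = f ((3 ^ n : ℕ) • u) * f y + f y * f ((3 ^ n : ℕ) • u))
    (hineq : ∀ μ : ℂ, ‖μ‖ = 1 → ∀ x y z : A,
      ‖(2 : ℂ) • f ((2⁻¹ : ℂ) • (μ • x + μ • y)) - μ • f x - μ • f y
          + f (star z) - star (f z)‖ ≤ θ * (‖x‖ ^ p + ‖y‖ ^ p + ‖z‖ ^ p))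
    (T : B) (hTU : T ∈ unitary B) (hTZ : T ∈ Set.center B)
    (hlim : Tendsto (fun n : ℕ => ((3 : ℂ) ^ n)⁻¹ • f ((3 ^ n : ℕ) • (1 : A)))
      atTop (𝓝 T)) :
    (∀ x y : A, f (x + y) = f x + f y) ∧
    (∀ (c : ℂ) (x : A), f (c • x) = c • f x) ∧
    (∀ x y : A, f (x * y + y * x) = f x * f y + f y * f x) ∧
    (∀ x : A, f (star x) = star (f x)) :=
  stmt3_general hrr0 p θ hp1 f hfc hf0 hmult hineq T hTU hTZ hlim
end

section
/- Let A be a unital C*-algebra of real rank zero, B a unital C*-algebra, and T : A → B a continuous ℂ-linear map such that T(uy + yu) = T(u)T(y) + T(y)T(u) for every u ∈ I₁(A_sa) and every y ∈ A. Then T(vy + yv) = T(v)T(y) + T(y)T(v) for every self-adjoint element v ∈ A with ‖v‖ = 1 and every y ∈ A. -/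
/-! Normalisation `x ↦ ‖x‖⁻¹ • x` is continuous at `v`, fixes it since `‖v‖ = 1`, and maps
invertible self-adjoint elements into `I₁(A_sa)`; with real rank zero, `v` therefore lies in the
closure of `I₁(A_sa)`. The elements satisfying the Jordan identity for all `y` form a closed set
because `T` is continuous. -/

/-- The set `I₁(A_sa)` of the paper. -/
def invertibleSelfAdjointSphere (A : Type*) [NormedRing A] [StarRing A] : Set A :=
  {u | IsSelfAdjoint u ∧ ‖u‖ = 1 ∧ IsUnit u}

theorem isClosed_setOf_forall_map_jordan {A B : Type*} [Ring A] [TopologicalSpace A]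
    [IsTopologicalRing A] [Ring B] [TopologicalSpace B] [IsTopologicalRing B] [T2Space B]
    {T : A → B} (hT : Continuous T) :
    IsClosed {v : A | ∀ y, T (v * y + y * v) = T v * T y + T y * T v} := by
  simp only [Set.ofPred_forall]
  exact isClosed_iInter fun y => isClosed_eq (by fun_prop) (by fun_prop)

theorem mem_closure_image_smul_inv_norm {E : Type*} [NormedAddCommGroup E] [NormedSpace ℝ E]
    {t : Set E} {v : E} (hv : v ∈ closure t) (hv1 : ‖v‖ = 1) :
    v ∈ closure ((fun x => ‖x‖⁻¹ • x) '' t) := by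
  have hv0 : ‖v‖ ≠ 0 := by simp [hv1]
  have hcont : ContinuousAt (fun x : E => ‖x‖⁻¹ • x) v :=
    (continuous_norm.continuousAt.inv₀ hv0).smul continuousAt_id
  simpa [hv1] using mem_closure_image hcont hv

theorem IsSelfAdjoint.smul_inv_norm_mem_invertibleSelfAdjointSphere {A : Type*} [NormedRing A]
    [StarRing A] [NormedAlgebra ℝ A] [StarModule ℝ A] [Nontrivial A] {x : A}
    (hx : IsSelfAdjoint x) (hxu : IsUnit x) :
    ‖x‖⁻¹ • x ∈ invertibleSelfAdjointSphere A := by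
  have hx0 : ‖x‖ ≠ 0 := norm_ne_zero_iff.mpr hxu.ne_zero
  exact ⟨(IsSelfAdjoint.all _).smul hx, norm_smul_inv_norm (𝕜 := ℝ) hxu.ne_zero,
    hxu.smul (Units.mk0 ‖x‖⁻¹ (inv_ne_zero hx0))⟩

theorem mem_closure_invertibleSelfAdjointSphere {A : Type*} [NormedRing A]
    [StarRing A] [NormedAlgebra ℝ A] [StarModule ℝ A]
    (hrr0 : {x : A | IsSelfAdjoint x} ⊆ closure {x : A | IsSelfAdjoint x ∧ IsUnit x})
    {v : A} (hv : IsSelfAdjoint v) (hv1 : ‖v‖ = 1) :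
    v ∈ closure (invertibleSelfAdjointSphere A) := by
  have : Nontrivial A := nontrivial_of_ne v 0 (norm_ne_zero_iff.mp (by simp [hv1]))
  refine closure_mono ?_ (mem_closure_image_smul_inv_norm (hrr0 hv) hv1)
  rintro _ ⟨x, ⟨hx, hxu⟩, rfl⟩
  exact hx.smul_inv_norm_mem_invertibleSelfAdjointSphere hxu

theorem stmt8_general
    {A B : Type*}
    [NormedRing A] [StarRing A] [NormedAlgebra ℂ A] [StarModule ℂ A]
    [NormedRing B] [NormedAlgebra ℂ B]
    (hrr0 : {x : A | IsSelfAdjoint x} ⊆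
      closure {x : A | IsSelfAdjoint x ∧ IsUnit x})
    (T : A →ₗ[ℂ] B) (hTc : Continuous T)
    (hT : ∀ u : A, IsSelfAdjoint u → ‖u‖ = 1 → IsUnit u → ∀ y : A,
      T (u * y + y * u) = T u * T y + T y * T u) :
    ∀ v : A, IsSelfAdjoint v → ‖v‖ = 1 → ∀ y : A,
      T (v * y + y * v) = T v * T y + T y * T v := by
  intro v hv hv1
  have hsphere : invertibleSelfAdjointSphere A ⊆
      {w | ∀ y, T (w * y + y * w) = T w * T y + T y * T w} :=
    fun u ⟨hu, hu1, huu⟩ => hT u hu hu1 huu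
  exact (isClosed_setOf_forall_map_jordan hTc).closure_subset_iff.mpr hsphere
    (mem_closure_invertibleSelfAdjointSphere hrr0 hv hv1)

/-- Let `A` be a unital C*-algebra of real rank zero and `T : A → B`
a continuous ℂ-linear map satisfying the Jordan identity for every element of
`I₁(A_sa)`. Then `T` satisfies the Jordan identity for every self-adjoint element
of norm one. -/
theorem stmt8
    {A B : Type*}
    [NormedRing A] [StarRing A] [CStarRing A] [CompleteSpace A]
    [NormedAlgebra ℂ A] [StarModule ℂ A]
    [NormedRing B] [StarRing B] [CStarRing B] [CompleteSpace B]
    [NormedAlgebra ℂ B] [StarModule ℂ B]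
    (hrr0 : {x : A | IsSelfAdjoint x} ⊆
      closure {x : A | IsSelfAdjoint x ∧ IsUnit x})
    (T : A →ₗ[ℂ] B) (hTc : Continuous T)
    (hT : ∀ u : A, IsSelfAdjoint u → ‖u‖ = 1 → IsUnit u → ∀ y : A,
      T (u * y + y * u) = T u * T y + T y * T u) :
    ∀ v : A, IsSelfAdjoint v → ‖v‖ = 1 → ∀ y : A,
      T (v * y + y * v) = T v * T y + T y * T v :=
  stmt8_general hrr0 T hTc hT
end

section
/- Let X and Y be vector spaces over ℂ and let h : X → Y be a map satisfying h((x + y + z)/3) + h((x − 2y + z)/3) + h((x + y − 2z)/3) = h(x) for all x, y, z ∈ X. Then h is additive: h(a + b) = h(a) + h(b) for all a, b ∈ X. -/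
/-!
Taking `x = y = z = 0` gives `3 h(0) = h(0)`, so `h(0) = 0`. Substituting `x = a + b`,
`y = a - b`, `z = a` turns the three arguments on the left into `a`, `b` and `0`.
-/

section ThreeTermEquation

variable {K X Y : Type*} [Field K] [CharZero K] [AddCommGroup X] [Module K X]
  [AddCommGroup Y] [Module K Y] (h : X → Y)
  (hfe : ∀ x y z : X,
    h ((3⁻¹ : K) • (x + y + z)) + h ((3⁻¹ : K) • (x - (2 : K) • y + z))
      + h ((3⁻¹ : K) • (x + y - (2 : K) • z)) = h x)
include hfe

theorem map_zero_of_three_term_eq : h 0 = 0 := by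
  have h3 : h 0 + h 0 + h 0 = h 0 := by simpa using hfe 0 0 0
  have h2 : (2 : K) • h 0 = 0 := by rw [two_smul]; exact add_eq_right.mp h3
  exact (smul_eq_zero.mp h2).resolve_left two_ne_zero

theorem map_add_of_three_term_eq (a b : X) : h (a + b) = h a + h b := by
  have key := hfe (a + b) (a - b) a
  have ha : (3⁻¹ : K) • (a + b + (a - b) + a) = a := by match_scalars <;> norm_num
  have hb : (3⁻¹ : K) • (a + b - (2 : K) • (a - b) + a) = b := by match_scalars <;> norm_num
  have h0 : (3⁻¹ : K) • (a + b + (a - b) - (2 : K) • a) = 0 := by match_scalars <;> norm_num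
  rw [ha, hb, h0, map_zero_of_three_term_eq h hfe, add_zero] at key
  exact key.symm

end ThreeTermEquation

/-- If `X`, `Y` are complex vector spaces and `h : X → Y` satisfies
`h((x+y+z)/3) + h((x−2y+z)/3) + h((x+y−2z)/3) = h(x)` for all `x, y, z`, then `h`
is additive. -/
theorem stmt10
    {X Y : Type*} [AddCommGroup X] [Module ℂ X] [AddCommGroup Y] [Module ℂ Y]
    (h : X → Y)
    (hfe : ∀ x y z : X,
      h ((3⁻¹ : ℂ) • (x + y + z)) + h ((3⁻¹ : ℂ) • (x - (2 : ℂ) • y + z))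
          + h ((3⁻¹ : ℂ) • (x + y - (2 : ℂ) • z)) = h x) :
    ∀ a b : X, h (a + b) = h a + h b :=
  map_add_of_three_term_eq h hfe
end
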